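/- arXiv:1705.10499 — 2 statements merged into one kernel-verified Lean document; each statement's English description precedes it below -/
import Mathlib

section
/- (AdaNGD_2, general convex case.) Let f : ℝ^d → ℝ be convex and differentiable with ‖∇f(x)‖ ≤ G for all x ∈ K, and let x_1, …, x_T and x̄_T be the AdaNGD_k iterates and output with k = 2, with g_t := ∇f(x_t) ≠ 0 for all t = 1, …, T. Then f(x̄_T) − min_{x ∈ K} f(x) ≤ √(2 D²) / √(Σ_{t=1}^T 1/‖g_t‖²) ≤ √2 · G D / √T. -/
/-!
With `vₜ := gₜ / ‖gₜ‖²` one has `‖vₜ‖² = ‖gₜ‖⁻²`, so AdaNGD₂ is projected gradient descent on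
the linear losses `⟪vₜ, ·⟫` with the AdaGrad-norm step sizes `ηₜ = D / √(2 ∑_{τ ≤ t} ‖v_τ‖²)`.
The usual AdaGrad analysis (nonexpansiveness of the projection towards points of `K`, Abel
summation against the nondecreasing `1 / (2ηₜ)`, and `∑ wₜ / √(w₁ + ⋯ + wₜ) ≤ 2 √(w₁ + ⋯ + w_T)`)
bounds the regret `∑ ⟪vₜ, xₜ - x⟫` by `√(2D²) √(∑ ‖gₜ‖⁻²)`. By convexity, `f x̄_T - f x` is at
most the `‖gₜ‖⁻²`-weighted average of `⟪gₜ, xₜ - x⟫`, i.e. that regret divided by `∑ ‖gₜ‖⁻²`;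
the second bound is `‖gₜ‖ ≤ G`.
-/

open Finset
open scoped RealInnerProductSpace

theorem div_sqrt_add_le {s w : ℝ} (hs : 0 ≤ s) (hw : 0 ≤ w) :
    w / √(s + w) ≤ 2 * (√(s + w) - √s) := by
  rcases (add_nonneg hs hw).eq_or_lt with h0 | hpos
  · obtain rfl : s = 0 := by linarith
    obtain rfl : w = 0 := by linarith
    simp
  have hroot : √s ≤ √(s + w) := Real.sqrt_le_sqrt (by linarith)
  have hsq : √(s + w) ^ 2 - √s ^ 2 = w := by
    rw [Real.sq_sqrt hpos.le, Real.sq_sqrt hs]; ring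
  rw [div_le_iff₀ (Real.sqrt_pos.mpr hpos)]
  nlinarith [Real.sqrt_nonneg s]

theorem sum_Icc_div_sqrt_partial_sum_le {w : ℕ → ℝ} (hw : ∀ t, 0 ≤ w t) (n : ℕ) :
    ∑ t ∈ Icc 1 n, w t / √(∑ τ ∈ Icc 1 t, w τ) ≤ 2 * √(∑ t ∈ Icc 1 n, w t) := by
  induction n with
  | zero => simp
  | succ n ih =>
    rw [sum_Icc_succ_top (by omega), sum_Icc_succ_top (by omega)]
    have := div_sqrt_add_le (sum_nonneg fun t (_ : t ∈ Icc 1 n) ↦ hw t) (hw (n + 1))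
    linarith

theorem sum_Icc_sub_mul_le_of_monotone {a b : ℕ → ℝ} {A : ℝ} (hb : Monotone b) (hb0 : 0 ≤ b 0)
    (n : ℕ) (ha : ∀ t ∈ Icc 1 (n + 1), a t ≤ A) :
    ∑ t ∈ Icc 1 n, (a t - a (t + 1)) * b t ≤ (A - a (n + 1)) * b n := by
  induction n with
  | zero => simpa using mul_nonneg (sub_nonneg.mpr (ha 1 (by simp))) hb0
  | succ n ih =>
    have ha' : a (n + 1) ≤ A := ha (n + 1) (by simp)
    have := ih fun t ht ↦ ha t (Icc_subset_Icc_right (by omega) ht)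
    rw [sum_Icc_succ_top (by omega)]
    nlinarith [mul_le_mul_of_nonneg_left (hb n.le_succ) (sub_nonneg.mpr ha')]

theorem div_sqrt_sum_inv_sq_le {T : ℕ} {a : ℕ → ℝ} {G c : ℝ} (hc : 0 ≤ c)
    (ha : ∀ t ∈ Icc 1 T, 0 < a t ∧ a t ≤ G) :
    c / √(∑ t ∈ Icc 1 T, (a t ^ 2)⁻¹) ≤ c * G / √T := by
  rcases T.eq_zero_or_pos with rfl | hT
  · simp
  obtain ⟨ha₁, ha₁G⟩ := ha 1 (mem_Icc.mpr ⟨le_rfl, hT⟩)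
  have hG : 0 < G := ha₁.trans_le ha₁G
  have hsum : (T : ℝ) * (G ^ 2)⁻¹ ≤ ∑ t ∈ Icc 1 T, (a t ^ 2)⁻¹ := by
    have := sum_le_sum fun t ht ↦
      inv_anti₀ (pow_pos (ha t ht).1 2) (pow_le_pow_left₀ (ha t ht).1.le (ha t ht).2 2)
    simpa using this
  have hroot : √T ≤ G * √(∑ t ∈ Icc 1 T, (a t ^ 2)⁻¹) := by
    rw [← Real.sqrt_sq hG.le, ← Real.sqrt_mul (sq_nonneg G)]
    refine Real.sqrt_le_sqrt ?_
    rwa [← div_le_iff₀' (by positivity), div_eq_mul_inv]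
  have hpos : 0 < √(∑ t ∈ Icc 1 T, (a t ^ 2)⁻¹) :=
    pos_of_mul_pos_right ((Real.sqrt_pos.mpr (by positivity)).trans_le hroot) hG.le
  rw [div_le_div_iff₀ hpos (by positivity), mul_assoc]
  exact mul_le_mul_of_nonneg_left hroot hc

section InnerProductSpace

variable {E : Type*} [NormedAddCommGroup E] [InnerProductSpace ℝ E]

theorem norm_sub_le_norm_sub_of_isNearest {K : Set E} (hK : Convex ℝ K) {u p z : E}
    (hp : p ∈ K) (hp_min : ∀ w ∈ K, ‖p - u‖ ≤ ‖w - u‖) (hz : z ∈ K) :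
    ‖p - z‖ ≤ ‖u - z‖ := by
  have : Nonempty K := ⟨⟨z, hz⟩⟩
  have hinf : ‖u - p‖ = ⨅ w : K, ‖u - w‖ := by
    refine le_antisymm (le_ciInf fun w ↦ ?_) (ciInf_le (f := fun w : K ↦ ‖u - w‖) ?_ ⟨p, hp⟩)
    · simpa only [norm_sub_rev u] using hp_min w w.2
    · exact ⟨0, by rintro _ ⟨w, rfl⟩; exact norm_nonneg _⟩
  have hobtuse : ⟪u - p, z - p⟫ ≤ 0 :=
    (norm_eq_iInf_iff_real_inner_le_zero hK hp).mp hinf z hz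
  have hsplit : ‖u - z‖ ^ 2 = ‖u - p‖ ^ 2 - 2 * ⟪u - p, z - p⟫ + ‖p - z‖ ^ 2 := by
    rw [show u - z = (u - p) - (z - p) by abel, norm_sub_sq_real,
      show z - p = -(p - z) by abel, norm_neg]
  exact pow_le_pow_iff_left₀ (norm_nonneg _) (norm_nonneg _) two_ne_zero |>.mp
    (by nlinarith [sq_nonneg ‖u - p‖])

theorem inner_le_of_norm_sub_le_norm_sub_smul {x y v z : E} {η : ℝ} (hη : 0 < η)
    (hy : ‖y - z‖ ≤ ‖x - η • v - z‖) :
    ⟪v, x - z⟫ ≤ (‖x - z‖ ^ 2 - ‖y - z‖ ^ 2) / (2 * η) + η / 2 * ‖v‖ ^ 2 := by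
  have hexpand : ‖x - η • v - z‖ ^ 2 = ‖x - z‖ ^ 2 - 2 * η * ⟪v, x - z⟫ + η ^ 2 * ‖v‖ ^ 2 := by
    rw [show x - η • v - z = (x - z) - η • v by abel, norm_sub_sq_real, real_inner_smul_right,
      norm_smul, Real.norm_of_nonneg hη.le, real_inner_comm]
    ring
  have hsq : ‖y - z‖ ^ 2 ≤ ‖x - η • v - z‖ ^ 2 := pow_le_pow_left₀ (norm_nonneg _) hy 2
  rw [div_add' _ _ _ (by positivity), le_div_iff₀ (by positivity)]
  nlinarith

theorem inner_le_of_adaGrad_norm_step {K : Set E} (hK : Convex ℝ K) {proj : E → E}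
    (hproj_mem : ∀ y, proj y ∈ K) (hproj_min : ∀ y, ∀ z ∈ K, ‖proj y - y‖ ≤ ‖z - y‖)
    {D s : ℝ} (hD : 0 < D) {v x z : E} (hvs : ‖v‖ ^ 2 ≤ s) (hz : z ∈ K) :
    ⟪v, x - z⟫ ≤ (‖x - z‖ ^ 2 - ‖proj (x - (D / √(2 * s)) • v) - z‖ ^ 2) * (√(2 * s) / (2 * D))
      + D / 4 * (2 * ‖v‖ ^ 2 / √(2 * s)) := by
  rcases (sq_nonneg ‖v‖).trans hvs |>.eq_or_lt with rfl | hs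
  · simp [norm_eq_zero.mp (pow_eq_zero_iff two_ne_zero |>.mp (le_antisymm hvs (sq_nonneg _)))]
  have hsqrt : 0 < √(2 * s) := Real.sqrt_pos.mpr (by positivity)
  refine (inner_le_of_norm_sub_le_norm_sub_smul (div_pos hD hsqrt)
    (norm_sub_le_norm_sub_of_isNearest hK (hproj_mem _) (hproj_min _) hz)).trans_eq ?_
  field_simp
  ring

theorem adaGrad_norm_regret_le {K : Set E} (hK : Convex ℝ K) {proj : E → E}
    (hproj_mem : ∀ y, proj y ∈ K) (hproj_min : ∀ y, ∀ z ∈ K, ‖proj y - y‖ ≤ ‖z - y‖)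
    {D : ℝ} {T : ℕ} {v x : ℕ → E} {η : ℕ → ℝ}
    (hη : ∀ t, η t = D / √(2 * ∑ τ ∈ Icc 1 t, ‖v τ‖ ^ 2))
    (hupd : ∀ t ∈ Icc 1 T, x (t + 1) = proj (x t - η t • v t))
    {z : E} (hz : z ∈ K) (hdist : ∀ t ∈ Icc 1 (T + 1), ‖x t - z‖ ≤ D) :
    ∑ t ∈ Icc 1 T, ⟪v t, x t - z⟫ ≤ √(2 * D ^ 2) * √(∑ t ∈ Icc 1 T, ‖v t‖ ^ 2) := by
  set S : ℕ → ℝ := fun t ↦ ∑ τ ∈ Icc 1 t, ‖v τ‖ ^ 2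
  rcases ((norm_nonneg _).trans (hdist 1 (by simp))).eq_or_lt with rfl | hD
  · have hxz : ∀ t ∈ Icc 1 T, x t = z := fun t ht ↦
      sub_eq_zero.mp (norm_le_zero_iff.mp (hdist t (Icc_subset_Icc_right (by omega) ht)))
    rw [sum_congr rfl fun t ht ↦ by rw [hxz t ht, sub_self, inner_zero_right]]
    simp
  set b : ℕ → ℝ := fun t ↦ √(2 * S t) / (2 * D) with hb
  have hS_mono : Monotone S := fun s t hst ↦
    sum_le_sum_of_subset_of_nonneg (Icc_subset_Icc_right hst) fun _ _ _ ↦ sq_nonneg _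
  have hb_mono : Monotone b := fun s t hst ↦ by
    simp only [hb]; gcongr; exact hS_mono hst
  have hstep : ∀ t ∈ Icc 1 T, ⟪v t, x t - z⟫ ≤
      (‖x t - z‖ ^ 2 - ‖x (t + 1) - z‖ ^ 2) * b t + D / 4 * (2 * ‖v t‖ ^ 2 / √(2 * S t)) :=
    fun t ht ↦ hupd t ht ▸ hη t ▸ inner_le_of_adaGrad_norm_step hK hproj_mem hproj_min hD
      (single_le_sum (f := fun τ ↦ ‖v τ‖ ^ 2) (fun _ _ ↦ sq_nonneg _) (by simp [(mem_Icc.mp ht).1]))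
      hz
  have hsqrt_sum := sum_Icc_div_sqrt_partial_sum_le (w := fun t ↦ 2 * ‖v t‖ ^ 2)
    (fun _ ↦ by positivity) T
  simp only [← mul_sum] at hsqrt_sum
  have habel := sum_Icc_sub_mul_le_of_monotone (a := fun t ↦ ‖x t - z‖ ^ 2) (A := D ^ 2)
    hb_mono (by positivity) T fun t ht ↦ pow_le_pow_left₀ (norm_nonneg _) (hdist t ht) 2
  have hclose : D ^ 2 * b T + D / 4 * (2 * √(2 * S T)) = √(2 * D ^ 2) * √(S T) := by
    simp only [hb]
    rw [Real.sqrt_mul zero_le_two, Real.sqrt_mul zero_le_two, Real.sqrt_sq hD.le]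
    field_simp
    ring
  calc ∑ t ∈ Icc 1 T, ⟪v t, x t - z⟫
      ≤ ∑ t ∈ Icc 1 T, ((‖x t - z‖ ^ 2 - ‖x (t + 1) - z‖ ^ 2) * b t
          + D / 4 * (2 * ‖v t‖ ^ 2 / √(2 * S t))) := sum_le_sum hstep
    _ ≤ D ^ 2 * b T + D / 4 * (2 * √(2 * S T)) := by
      rw [sum_add_distrib, ← mul_sum]
      gcongr
      nlinarith [mul_nonneg (sq_nonneg ‖x (T + 1) - z‖) (show 0 ≤ b T by positivity)]
    _ = √(2 * D ^ 2) * √(S T) := hclose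

theorem sub_le_sum_mul_inner_of_gradient_ineq {f : E → ℝ} {f' : E → E}
    (hf : ∀ x y, f x + ⟪f' x, y - x⟫ ≤ f y) {ι : Type*} {s : Finset ι} {w : ι → ℝ}
    (hw₀ : ∀ i ∈ s, 0 ≤ w i) (hw₁ : ∑ i ∈ s, w i = 1) (p : ι → E) (z : E) :
    f (∑ i ∈ s, w i • p i) - f z ≤ ∑ i ∈ s, w i * ⟪f' (p i), p i - z⟫ := by
  set c := ∑ i ∈ s, w i • p i
  have hcentre : ∑ i ∈ s, w i • (p i - c) = 0 := by
    simp only [smul_sub, sum_sub_distrib, ← sum_smul, hw₁, one_smul, c, sub_self]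
  calc f c - f z = ∑ i ∈ s, w i * (f c + ⟪f' c, p i - c⟫ - f z) := by
        simp only [mul_sub, mul_add, sum_add_distrib, sum_sub_distrib, ← sum_mul, hw₁,
          ← real_inner_smul_right, ← inner_sum, hcentre, inner_zero_right]
        ring
    _ ≤ ∑ i ∈ s, w i * ⟪f' (p i), p i - z⟫ := by
      refine sum_le_sum fun i hi ↦ mul_le_mul_of_nonneg_left ?_ (hw₀ i hi)
      have := hf (p i) z
      rw [← neg_sub, inner_neg_right] at this
      linarith [hf c (p i)]

end InnerProductSpace

theorem adangd_two_general_general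
    {d : ℕ} (T : ℕ) (hT : 1 ≤ T) (G : ℝ)
    (K : Set (EuclideanSpace ℝ (Fin d)))
    (hKbdd : Bornology.IsBounded K)
    (hKconv : Convex ℝ K)
    (proj : EuclideanSpace ℝ (Fin d) → EuclideanSpace ℝ (Fin d))
    (hproj_mem : ∀ y, proj y ∈ K)
    (hproj_min : ∀ y, ∀ z ∈ K, ‖proj y - y‖ ≤ ‖z - y‖)
    (D : ℝ) (hD : D = Metric.diam K)
    (f : EuclideanSpace ℝ (Fin d) → ℝ)
    (hconv : ∀ x y, f x + (inner ℝ (gradient f x) (y - x) : ℝ) ≤ f y)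
    (hG : ∀ x ∈ K, ‖gradient f x‖ ≤ G)
    (x : ℕ → EuclideanSpace ℝ (Fin d)) (g : ℕ → EuclideanSpace ℝ (Fin d)) (η : ℕ → ℝ)
    (hx1 : x 1 ∈ K)
    (hg : ∀ t, g t = gradient f (x t))
    (hgne : ∀ t ∈ Finset.Icc 1 T, g t ≠ 0)
    (hη : ∀ t, η t = D / Real.sqrt (2 * ∑ τ ∈ Finset.Icc 1 t, (‖g τ‖ ^ 2)⁻¹))
    (hupd : ∀ t ∈ Finset.Icc 1 T, x (t + 1) = proj (x t - (η t / ‖g t‖ ^ 2) • g t))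
    (xbar : EuclideanSpace ℝ (Fin d))
    (hxbar : xbar = ∑ t ∈ Finset.Icc 1 T, (((‖g t‖ ^ 2)⁻¹) / ∑ τ ∈ Finset.Icc 1 T, (‖g τ‖ ^ 2)⁻¹) • x t)
    :
    (∀ xs ∈ K,
      f xbar - f xs ≤
        Real.sqrt (2 * D ^ 2) / Real.sqrt (∑ t ∈ Finset.Icc 1 T, (‖g t‖ ^ 2)⁻¹)) ∧
    Real.sqrt (2 * D ^ 2) / Real.sqrt (∑ t ∈ Finset.Icc 1 T, (‖g t‖ ^ 2)⁻¹) ≤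
      Real.sqrt 2 * G * D / Real.sqrt T := by
  set S := ∑ t ∈ Icc 1 T, (‖g t‖ ^ 2)⁻¹
  have hS : 0 < S := sum_pos (fun t ht ↦ by have := norm_pos_iff.mpr (hgne t ht); positivity)
    ⟨1, mem_Icc.mpr ⟨le_rfl, hT⟩⟩
  have hxK : ∀ t ∈ Icc 1 (T + 1), x t ∈ K := by
    rintro (_ | _ | t) ht
    · simp at ht
    · exact hx1
    · rw [hupd (t + 1) (by simp only [mem_Icc] at ht ⊢; omega)]
      exact hproj_mem _
  have hv : ∀ t, ‖(‖g t‖ ^ 2)⁻¹ • g t‖ ^ 2 = (‖g t‖ ^ 2)⁻¹ := fun t ↦ by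
    rw [norm_smul, norm_inv, norm_pow, norm_norm]; field_simp
  refine ⟨fun xs hxs ↦ ?_, ?_⟩
  · have hregret := adaGrad_norm_regret_le hKconv hproj_mem hproj_min
      (v := fun t ↦ (‖g t‖ ^ 2)⁻¹ • g t) (by simpa only [hv] using hη)
      (fun t ht ↦ by rw [hupd t ht, smul_smul, div_eq_mul_inv]) hxs
      fun t ht ↦ hD ▸ dist_eq_norm (x t) xs ▸ Metric.dist_le_diam_of_mem hKbdd (hxK t ht) hxs
    have hjensen := sub_le_sum_mul_inner_of_gradient_ineq hconv (s := Icc 1 T)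
      (w := fun t ↦ (‖g t‖ ^ 2)⁻¹ / S) (fun t _ ↦ by positivity)
      (by rw [← sum_div, div_self hS.ne']) x xs
    simp only [hv, ← hxbar, ← hg] at hjensen hregret
    calc f xbar - f xs ≤ (∑ t ∈ Icc 1 T, ⟪(‖g t‖ ^ 2)⁻¹ • g t, x t - xs⟫) / S := by
          simpa only [sum_div, real_inner_smul_left, div_mul_eq_mul_div] using hjensen
      _ ≤ √(2 * D ^ 2) * √S / S := by gcongr
      _ = √(2 * D ^ 2) / √S := by rw [mul_div_assoc, Real.sqrt_div_self', mul_one_div]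
  · have hD0 : 0 ≤ D := hD ▸ Metric.diam_nonneg
    rw [Real.sqrt_mul zero_le_two, Real.sqrt_sq hD0, mul_right_comm]
    exact div_sqrt_sum_inv_sq_le (by positivity) fun t ht ↦
      ⟨norm_pos_iff.mpr (hgne t ht), hg t ▸ hG _ (hxK t (Icc_subset_Icc_right (by omega) ht))⟩

theorem adangd_two_general
    {d : ℕ} (T : ℕ) (hT : 1 ≤ T) (G : ℝ)
    (K : Set (EuclideanSpace ℝ (Fin d)))
    (hKne : K.Nonempty) (hKcl : IsClosed K) (hKbdd : Bornology.IsBounded K)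
    (hKconv : Convex ℝ K)
    (proj : EuclideanSpace ℝ (Fin d) → EuclideanSpace ℝ (Fin d))
    (hproj_mem : ∀ y, proj y ∈ K)
    (hproj_min : ∀ y, ∀ z ∈ K, ‖proj y - y‖ ≤ ‖z - y‖)
    (D : ℝ) (hD : D = Metric.diam K)
    (f : EuclideanSpace ℝ (Fin d) → ℝ)
    (hdiff : Differentiable ℝ f)
    (hconv : ∀ x y, f x + (inner ℝ (gradient f x) (y - x) : ℝ) ≤ f y)
    (hG : ∀ x ∈ K, ‖gradient f x‖ ≤ G)
    (x : ℕ → EuclideanSpace ℝ (Fin d)) (g : ℕ → EuclideanSpace ℝ (Fin d)) (η : ℕ → ℝ)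
    (hx1 : x 1 ∈ K)
    (hg : ∀ t, g t = gradient f (x t))
    (hgne : ∀ t ∈ Finset.Icc 1 T, g t ≠ 0)
    (hη : ∀ t, η t = D / Real.sqrt (2 * ∑ τ ∈ Finset.Icc 1 t, (‖g τ‖ ^ 2)⁻¹))
    (hupd : ∀ t ∈ Finset.Icc 1 T, x (t + 1) = proj (x t - (η t / ‖g t‖ ^ 2) • g t))
    (xbar : EuclideanSpace ℝ (Fin d))
    (hxbar : xbar = ∑ t ∈ Finset.Icc 1 T, (((‖g t‖ ^ 2)⁻¹) / ∑ τ ∈ Finset.Icc 1 T, (‖g τ‖ ^ 2)⁻¹) • x t)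
    :
    (∀ xs ∈ K,
      f xbar - f xs ≤
        Real.sqrt (2 * D ^ 2) / Real.sqrt (∑ t ∈ Finset.Icc 1 T, (‖g t‖ ^ 2)⁻¹)) ∧
    Real.sqrt (2 * D ^ 2) / Real.sqrt (∑ t ∈ Finset.Icc 1 T, (‖g t‖ ^ 2)⁻¹) ≤
      Real.sqrt 2 * G * D / Real.sqrt T :=
  adangd_two_general_general T hT G K hKbdd hKconv proj hproj_mem hproj_min D hD f hconv hG x g η
    hx1 hg hgne hη hupd xbar hxbar
end

section
/- (SC-AdaNGD_k guarantee.) Let k ∈ ℝ, H > 0, let f : ℝ^d → ℝ be differentiable and H-strongly convex, and let x_1, …, x_T and x̄_T be the SC-AdaNGD_k iterates and output, with g_t := ∇f(x_t) ≠ 0 for all t = 1, …, T. Then f(x̄_T) − min_{x ∈ K} f(x) ≤ (1 / (2H Σ_{t=1}^T ‖g_t‖^{−k})) · Σ_{t=1}^T ‖g_t‖^{−2(k−1)} / (Σ_{τ=1}^t ‖g_τ‖^{−k}). -/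
/-!
Weight round `t` by `w_t = ‖g_t‖^{-k}` and write `S_t = w_1 + ⋯ + w_t`, so that the update is
projected gradient descent with step `w_t / (H S_t)` on the direction `g_t`. Strong convexity
at `x_t` and nonexpansiveness of the projection toward `x* ∈ K` give, for `u_t = ‖x_t - x*‖²`,
`w_t (f x_t - f x*) ≤ (H/2) (S_{t-1} u_t - S_t u_{t+1}) + w_t² ‖g_t‖² / (2 H S_t)`.
The first terms telescope to `-(H/2) S_T u_{T+1} ≤ 0` because `S_0 = 0`, and Jensen's inequality
for the weights `w_t / S_T` bounds `f x̄_T - f x*` by `1 / S_T` times the weighted regret.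
-/

open Finset
open scoped InnerProductSpace

section InnerProductSpace

variable {E : Type*} [NormedAddCommGroup E] [InnerProductSpace ℝ E]

lemma Convex.real_inner_sub_le_zero_of_forall_norm_sub_le {K : Set E} (hK : Convex ℝ K)
    {y p z : E} (hp : p ∈ K) (hmin : ∀ z ∈ K, ‖p - y‖ ≤ ‖z - y‖) (hz : z ∈ K) :
    ⟪y - p, z - p⟫_ℝ ≤ 0 := by
  have : Nonempty K := ⟨⟨p, hp⟩⟩
  refine (norm_eq_iInf_iff_real_inner_le_zero hK hp).1
    (le_antisymm (le_ciInf fun w => ?_) ?_) z hz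
  · rw [norm_sub_rev, norm_sub_rev y]
    exact hmin w w.2
  · exact ciInf_le ⟨0, by rintro _ ⟨w, rfl⟩; exact norm_nonneg _⟩ (⟨p, hp⟩ : K)

lemma Convex.norm_sub_le_of_forall_norm_sub_le {K : Set E} (hK : Convex ℝ K)
    {y p z : E} (hp : p ∈ K) (hmin : ∀ z ∈ K, ‖p - y‖ ≤ ‖z - y‖) (hz : z ∈ K) :
    ‖p - z‖ ≤ ‖y - z‖ := by
  have hvar := hK.real_inner_sub_le_zero_of_forall_norm_sub_le hp hmin hz
  have hexp := norm_sub_sq_real (y - p) (z - p)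
  rw [sub_sub_sub_cancel_right, norm_sub_rev z p] at hexp
  refine (pow_le_pow_iff_left₀ (norm_nonneg _) (norm_nonneg _) two_ne_zero).1 ?_
  nlinarith [sq_nonneg ‖y - p‖]

lemma mul_sq_norm_le_of_norm_le_norm_sub_smul {H S w : ℝ} (hH : 0 < H) (hS : 0 < S)
    {v g v' : E} (hv' : ‖v'‖ ≤ ‖v - (w / (H * S)) • g‖) :
    H / 2 * S * ‖v'‖ ^ 2 ≤
      H / 2 * S * ‖v‖ ^ 2 - w * ⟪g, v⟫_ℝ + w ^ 2 * ‖g‖ ^ 2 / (2 * H * S) := by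
  have hsq : ‖v'‖ ^ 2 ≤ ‖v - (w / (H * S)) • g‖ ^ 2 :=
    pow_le_pow_left₀ (norm_nonneg _) hv' 2
  rw [norm_sub_sq_real, real_inner_smul_right, real_inner_comm, norm_smul, Real.norm_eq_abs,
    mul_pow, sq_abs] at hsq
  calc H / 2 * S * ‖v'‖ ^ 2
      ≤ H / 2 * S * (‖v‖ ^ 2 - 2 * (w / (H * S) * ⟪g, v⟫_ℝ) + (w / (H * S)) ^ 2 * ‖g‖ ^ 2) :=
        mul_le_mul_of_nonneg_left hsq (by positivity)
    _ = H / 2 * S * ‖v‖ ^ 2 - w * ⟪g, v⟫_ℝ + w ^ 2 * ‖g‖ ^ 2 / (2 * H * S) := by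
        field_simp

lemma map_sum_le_of_forall_add_inner_le {f : E → ℝ} {f' : E → E}
    (hf : ∀ x y, f x + ⟪f' x, y - x⟫_ℝ ≤ f y) {ι : Type*} {s : Finset ι} {c : ι → ℝ}
    (hc : ∀ i ∈ s, 0 ≤ c i) (hc1 : ∑ i ∈ s, c i = 1) (x : ι → E) :
    f (∑ i ∈ s, c i • x i) ≤ ∑ i ∈ s, c i * f (x i) := by
  set m := ∑ i ∈ s, c i • x i with hm
  have hbal : ∑ i ∈ s, c i • (x i - m) = 0 := by
    rw [sum_congr rfl fun i _ => smul_sub (c i) (x i) m, sum_sub_distrib, ← sum_smul, hc1,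
      one_smul, ← hm, sub_self]
  calc f m = ∑ i ∈ s, c i * (f m + ⟪f' m, x i - m⟫_ℝ) := by
        simp only [mul_add, sum_add_distrib, ← sum_mul, hc1, one_mul, ← real_inner_smul_right,
          ← inner_sum, hbal, inner_zero_right, add_zero]
    _ ≤ ∑ i ∈ s, c i * f (x i) :=
        sum_le_sum fun i hi => mul_le_mul_of_nonneg_left (hf m (x i)) (hc i hi)

variable {K : Set E} {proj : E → E} {H : ℝ} {f : E → ℝ} {x g : ℕ → E} {w η : ℕ → ℝ} {xs : E}

lemma weighted_regret_add_le_of_projected_step (hK : Convex ℝ K) (hproj_mem : ∀ y, proj y ∈ K)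
    (hproj_min : ∀ y, ∀ z ∈ K, ‖proj y - y‖ ≤ ‖z - y‖) (hH : 0 < H) (hxs : xs ∈ K) {T : ℕ}
    (hw : ∀ t ∈ Icc 1 T, 0 < w t)
    (hη : ∀ t, η t = 1 / (H * ∑ τ ∈ Icc 1 t, w τ))
    (hupd : ∀ t ∈ Icc 1 T, x (t + 1) = proj (x t - (η t * w t) • g t))
    (hsc : ∀ t ∈ Icc 1 T, f (x t) - f xs ≤ ⟪g t, x t - xs⟫_ℝ - H / 2 * ‖x t - xs‖ ^ 2) :
    ∑ t ∈ Icc 1 T, w t * (f (x t) - f xs) + H / 2 * (∑ τ ∈ Icc 1 T, w τ) * ‖x (T + 1) - xs‖ ^ 2 ≤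
      ∑ t ∈ Icc 1 T, w t ^ 2 * ‖g t‖ ^ 2 / (2 * H * ∑ τ ∈ Icc 1 t, w τ) := by
  induction T with
  | zero => simp
  | succ n ih =>
    have hn : n + 1 ∈ Icc 1 (n + 1) := mem_Icc.2 ⟨Nat.le_add_left 1 n, le_rfl⟩
    have hsub : ∀ t ∈ Icc 1 n, t ∈ Icc 1 (n + 1) := fun t ht =>
      mem_Icc.2 ⟨(mem_Icc.1 ht).1, (mem_Icc.1 ht).2.trans n.le_succ⟩
    specialize ih (fun t ht => hw t (hsub t ht)) (fun t ht => hupd t (hsub t ht))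
      (fun t ht => hsc t (hsub t ht))
    set S := ∑ τ ∈ Icc 1 (n + 1), w τ with hS
    have hSn : S = ∑ τ ∈ Icc 1 n, w τ + w (n + 1) := sum_Icc_succ_top (Nat.le_add_left 1 n) w
    have hSpos : 0 < S := sum_pos hw ⟨n + 1, hn⟩
    have hstep : ‖x (n + 1 + 1) - xs‖ ≤ ‖(x (n + 1) - xs) - (w (n + 1) / (H * S)) • g (n + 1)‖ := by
      rw [hupd _ hn, hη, sub_right_comm, ← hS, one_div_mul_eq_div, mul_comm]
      exact hK.norm_sub_le_of_forall_norm_sub_le (hproj_mem _) (hproj_min _) hxs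
    have hproj := mul_sq_norm_le_of_norm_le_norm_sub_smul hH hSpos hstep
    have hconv := mul_le_mul_of_nonneg_left (hsc _ hn) (hw _ hn).le
    have hsplit : H / 2 * S * ‖x (n + 1) - xs‖ ^ 2 = H / 2 * (∑ τ ∈ Icc 1 n, w τ) *
        ‖x (n + 1) - xs‖ ^ 2 + w (n + 1) * (H / 2 * ‖x (n + 1) - xs‖ ^ 2) := by
      rw [hSn]
      ring
    rw [mul_sub] at hconv
    rw [sum_Icc_succ_top (Nat.le_add_left 1 n), sum_Icc_succ_top (Nat.le_add_left 1 n), ← hS]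
    linarith

lemma weighted_regret_le_of_projected_step (hK : Convex ℝ K) (hproj_mem : ∀ y, proj y ∈ K)
    (hproj_min : ∀ y, ∀ z ∈ K, ‖proj y - y‖ ≤ ‖z - y‖) (hH : 0 < H) (hxs : xs ∈ K) {T : ℕ}
    (hw : ∀ t ∈ Icc 1 T, 0 < w t)
    (hη : ∀ t, η t = 1 / (H * ∑ τ ∈ Icc 1 t, w τ))
    (hupd : ∀ t ∈ Icc 1 T, x (t + 1) = proj (x t - (η t * w t) • g t))
    (hsc : ∀ t ∈ Icc 1 T, f (x t) - f xs ≤ ⟪g t, x t - xs⟫_ℝ - H / 2 * ‖x t - xs‖ ^ 2) :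
    ∑ t ∈ Icc 1 T, w t * (f (x t) - f xs) ≤
      ∑ t ∈ Icc 1 T, w t ^ 2 * ‖g t‖ ^ 2 / (2 * H * ∑ τ ∈ Icc 1 t, w τ) := by
  have hS : 0 ≤ ∑ τ ∈ Icc 1 T, w τ := sum_nonneg fun t ht => (hw t ht).le
  have := weighted_regret_add_le_of_projected_step hK hproj_mem hproj_min hH hxs hw hη hupd hsc
  nlinarith [mul_nonneg (mul_nonneg hH.le hS) (sq_nonneg ‖x (T + 1) - xs‖)]

end InnerProductSpace

lemma Real.rpow_neg_sq_mul_sq {a : ℝ} (ha : 0 < a) (k : ℝ) :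
    (a ^ (-k)) ^ 2 * a ^ 2 = a ^ (-(2 * (k - 1))) := by
  rw [← Real.rpow_natCast, ← Real.rpow_natCast, ← Real.rpow_mul ha.le, ← Real.rpow_add ha]
  congr 1
  push_cast
  ring

theorem sc_adangd_k_guarantee_general
    {d : ℕ} (T : ℕ) (hT : 1 ≤ T) (k H : ℝ) (hH : 0 < H)
    (K : Set (EuclideanSpace ℝ (Fin d)))
    (hKconv : Convex ℝ K)
    (proj : EuclideanSpace ℝ (Fin d) → EuclideanSpace ℝ (Fin d))
    (hproj_mem : ∀ y, proj y ∈ K)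
    (hproj_min : ∀ y, ∀ z ∈ K, ‖proj y - y‖ ≤ ‖z - y‖)
    (f : EuclideanSpace ℝ (Fin d) → ℝ)
    (hsc : ∀ x y, f x + (inner ℝ (gradient f x) (y - x) : ℝ) + (H / 2) * ‖x - y‖ ^ 2 ≤ f y)
    (x : ℕ → EuclideanSpace ℝ (Fin d)) (g : ℕ → EuclideanSpace ℝ (Fin d)) (η : ℕ → ℝ)
    (hg : ∀ t, g t = gradient f (x t))
    (hgne : ∀ t ∈ Finset.Icc 1 T, g t ≠ 0)
    (hη : ∀ t, η t = 1 / (H * ∑ τ ∈ Finset.Icc 1 t, ‖g τ‖ ^ (-k : ℝ)))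
    (hupd : ∀ t ∈ Finset.Icc 1 T, x (t + 1) = proj (x t - (η t * ‖g t‖ ^ (-k : ℝ)) • g t))
    (xbar : EuclideanSpace ℝ (Fin d))
    (hxbar : xbar = ∑ t ∈ Finset.Icc 1 T, ((‖g t‖ ^ (-k : ℝ)) / ∑ τ ∈ Finset.Icc 1 T, ‖g τ‖ ^ (-k : ℝ)) • x t)
    :
    ∀ xs ∈ K,
      f xbar - f xs ≤
        (1 / (2 * H * ∑ t ∈ Finset.Icc 1 T, ‖g t‖ ^ (-k : ℝ))) *
          ∑ t ∈ Finset.Icc 1 T,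
            ‖g t‖ ^ (-(2 * (k - 1)) : ℝ) / ∑ τ ∈ Finset.Icc 1 t, ‖g τ‖ ^ (-k : ℝ) := by
  intro xs hxs
  have hg_pos : ∀ t ∈ Icc 1 T, 0 < ‖g t‖ := fun t ht => norm_pos_iff.2 (hgne t ht)
  set w : ℕ → ℝ := fun t => ‖g t‖ ^ (-k : ℝ)
  set S := ∑ t ∈ Icc 1 T, w t
  have hw : ∀ t ∈ Icc 1 T, 0 < w t := fun t ht => Real.rpow_pos_of_pos (hg_pos t ht) _
  have hS : 0 < S := sum_pos hw ⟨T, mem_Icc.2 ⟨hT, le_rfl⟩⟩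
  have hregret := weighted_regret_le_of_projected_step (f := f) hKconv hproj_mem hproj_min hH hxs
    hw hη hupd fun t _ => by
      have := hsc (x t) xs
      rw [← hg, ← neg_sub, inner_neg_right] at this
      linarith
  have hweights : ∑ t ∈ Icc 1 T, w t / S = 1 := by rw [← sum_div, div_self hS.ne']
  have hjensen : f xbar ≤ ∑ t ∈ Icc 1 T, w t / S * f (x t) := hxbar ▸
    map_sum_le_of_forall_add_inner_le (fun a b => (le_add_of_nonneg_right (by positivity)).trans
      (hsc a b)) (fun t ht => (div_pos (hw t ht) hS).le) hweights x
  calc f xbar - f xs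
      ≤ (1 / S) * ∑ t ∈ Icc 1 T, w t * (f (x t) - f xs) := by
        have hmean : (1 / S) * ∑ t ∈ Icc 1 T, w t * (f (x t) - f xs) =
            ∑ t ∈ Icc 1 T, w t / S * f (x t) - (∑ t ∈ Icc 1 T, w t / S) * f xs := by
          rw [mul_sum, sum_mul, ← sum_sub_distrib]
          exact sum_congr rfl fun t _ => by ring
        rw [hmean, hweights, one_mul]
        linarith
    _ ≤ (1 / S) * ∑ t ∈ Icc 1 T, w t ^ 2 * ‖g t‖ ^ 2 / (2 * H * ∑ τ ∈ Icc 1 t, w τ) :=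
        mul_le_mul_of_nonneg_left hregret (by positivity)
    _ = _ := by
        rw [mul_sum, mul_sum]
        refine sum_congr rfl fun t ht => ?_
        rw [Real.rpow_neg_sq_mul_sq (hg_pos t ht)]
        field_simp

theorem sc_adangd_k_guarantee
    {d : ℕ} (T : ℕ) (hT : 1 ≤ T) (k H : ℝ) (hH : 0 < H)
    (K : Set (EuclideanSpace ℝ (Fin d)))
    (hKne : K.Nonempty) (hKcl : IsClosed K) (hKbdd : Bornology.IsBounded K)
    (hKconv : Convex ℝ K)
    (proj : EuclideanSpace ℝ (Fin d) → EuclideanSpace ℝ (Fin d))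
    (hproj_mem : ∀ y, proj y ∈ K)
    (hproj_min : ∀ y, ∀ z ∈ K, ‖proj y - y‖ ≤ ‖z - y‖)
    (f : EuclideanSpace ℝ (Fin d) → ℝ)
    (hdiff : Differentiable ℝ f)
    (hsc : ∀ x y, f x + (inner ℝ (gradient f x) (y - x) : ℝ) + (H / 2) * ‖x - y‖ ^ 2 ≤ f y)
    (x : ℕ → EuclideanSpace ℝ (Fin d)) (g : ℕ → EuclideanSpace ℝ (Fin d)) (η : ℕ → ℝ)
    (hx1 : x 1 ∈ K)
    (hg : ∀ t, g t = gradient f (x t))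
    (hgne : ∀ t ∈ Finset.Icc 1 T, g t ≠ 0)
    (hη : ∀ t, η t = 1 / (H * ∑ τ ∈ Finset.Icc 1 t, ‖g τ‖ ^ (-k : ℝ)))
    (hupd : ∀ t ∈ Finset.Icc 1 T, x (t + 1) = proj (x t - (η t * ‖g t‖ ^ (-k : ℝ)) • g t))
    (xbar : EuclideanSpace ℝ (Fin d))
    (hxbar : xbar = ∑ t ∈ Finset.Icc 1 T, ((‖g t‖ ^ (-k : ℝ)) / ∑ τ ∈ Finset.Icc 1 T, ‖g τ‖ ^ (-k : ℝ)) • x t)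
    :
    ∀ xs ∈ K,
      f xbar - f xs ≤
        (1 / (2 * H * ∑ t ∈ Finset.Icc 1 T, ‖g t‖ ^ (-k : ℝ))) *
          ∑ t ∈ Finset.Icc 1 T,
            ‖g t‖ ^ (-(2 * (k - 1)) : ℝ) / ∑ τ ∈ Finset.Icc 1 t, ‖g τ‖ ^ (-k : ℝ) :=
  sc_adangd_k_guarantee_general T hT k H hH K hKconv proj hproj_mem hproj_min f hsc x g η hg hgne hη
    hupd xbar hxbar
end
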